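/- arXiv:1008.4940 — 3 statements merged into one kernel-verified Lean document; each statement's English description precedes it below -/
import Mathlib

section
/- Let G be a connected 4-regular multigraph with a crossing structure (for each vertex, a partition of its four incident half-edges into two pairs). Then G admits a turning Eulerian circuit, i.e., an Eulerian circuit such that at each visit to a vertex, the circuit enters along a half-edge of one pair and leaves along a half-edge of the other pair. -/
/-- A multigraph: vertices, edges, and for each edge its (ordered) pair of ends. -/
structure Multigraph where
  V : Type
  E : Type
  ends : E → V × V

namespace Multigraph

variable (G : Multigraph)

/-- A half-edge is a pair (edge, chosen end); `hvtx` is the vertex at that end. -/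
def hvtx (h : G.E × Bool) : G.V :=
  if h.2 then (G.ends h.1).1 else (G.ends h.1).2

/-- `G` is 4-regular: every vertex has exactly four incident half-edges. -/
def FourRegular : Prop :=
  ∀ v : G.V, {h : G.E × Bool | G.hvtx h = v}.ncard = 4

def adj (v w : G.V) : Prop :=
  ∃ e : G.E, G.ends e = (v, w) ∨ G.ends e = (w, v)

def Conn : Prop := ∀ v w : G.V, Relation.ReflTransGen G.adj v w

/-- A closed walk of length `n`, given as a cyclic sequence of darts.
The dart `(e, b)` is traversed from `hvtx (e, b)` to `hvtx (e, !b)`. -/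
structure ClosedWalk (n : ℕ) where
  dart : ZMod n → G.E × Bool
  compat : ∀ i, G.hvtx (dart (i + 1)) = G.hvtx ((dart i).1, !(dart i).2)

variable {G}

namespace ClosedWalk

variable {n : ℕ} (w : G.ClosedWalk n)

/-- The vertex visited at step `i` (tail of the `i`-th dart). -/
def vtx (i : ZMod n) : G.V := G.hvtx (w.dart i)

/-- The half-edge along which the walk enters the vertex visited at step `i`. -/
def enter (i : ZMod n) : G.E × Bool := ((w.dart (i - 1)).1, !(w.dart (i - 1)).2)

/-- The half-edge along which the walk leaves the vertex visited at step `i`. -/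
def leave (i : ZMod n) : G.E × Bool := w.dart i

def edges : Set G.E := {e | ∃ i, (w.dart i).1 = e}

def Visits (v : G.V) : Prop := ∃ i, w.vtx i = v

/-- A (closed) trail: no repeated edges. -/
def IsTrail : Prop := Function.Injective fun i => (w.dart i).1

/-- An Eulerian circuit: every edge is traversed exactly once. -/
def IsEulerian : Prop := ∀ e : G.E, ∃! i, (w.dart i).1 = e

/-- A simple (non-self-intersecting) cycle: no repeated vertices. -/
def IsSimple : Prop := Function.Injective w.vtx

end ClosedWalk

def EdgeDisjoint {n m : ℕ} (w₁ : G.ClosedWalk n) (w₂ : G.ClosedWalk m) : Prop :=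
  ∀ e, e ∈ w₁.edges → e ∉ w₂.edges

variable (G)

/-- A crossing structure: at each vertex, the four incident half-edges are
partitioned into two pairs, recorded by a `Bool`-labelling `p` such that each
label class at each vertex has exactly two half-edges. -/
structure XStructure where
  p : G.E × Bool → Bool
  pairs : ∀ (v : G.V) (b : Bool), {h : G.E × Bool | G.hvtx h = v ∧ p h = b}.ncard = 2

variable {G}

/-- `v` is a crossing vertex of two (edge-disjoint) closed walks: one walk has a
passage through `v` using both half-edges of one pair, and the other walk has a
passage through `v` using both half-edges of the other pair. -/
def CrossingVertex (X : XStructure G) {n m : ℕ}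
    (w₁ : G.ClosedWalk n) (w₂ : G.ClosedWalk m) (v : G.V) : Prop :=
  ∃ i j, w₁.vtx i = v ∧ w₂.vtx j = v ∧
    X.p (w₁.enter i) = X.p (w₁.leave i) ∧
    X.p (w₂.enter j) = X.p (w₂.leave j) ∧
    X.p (w₁.leave i) ≠ X.p (w₂.leave j)

/-- A closed walk is turning if at each passage through a vertex it enters and
leaves along half-edges of different pairs. -/
def Turning (X : XStructure G) {n : ℕ} (w : G.ClosedWalk n) : Prop :=
  ∀ i, X.p (w.enter i) ≠ X.p (w.leave i)

/-- Strongly turning: turning, and the entries into any given vertex always use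
half-edges of the same pair. -/
def StronglyTurning (X : XStructure G) {n : ℕ} (w : G.ClosedWalk n) : Prop :=
  Turning X w ∧ ∀ i j, w.vtx i = w.vtx j → X.p (w.enter i) = X.p (w.enter j)

/-- Vertices `P ≠ Q` are interlaced with respect to a closed walk if their
occurrences appear along the walk in cyclic order `P Q P Q`. -/
def Interlaced {n : ℕ} (w : G.ClosedWalk n) (P Q : G.V) : Prop :=
  P ≠ Q ∧ ∃ a b c d : ZMod n, a.val < b.val ∧ b.val < c.val ∧ c.val < d.val ∧
    ((w.vtx a = P ∧ w.vtx b = Q ∧ w.vtx c = P ∧ w.vtx d = Q) ∨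
     (w.vtx a = Q ∧ w.vtx b = P ∧ w.vtx c = Q ∧ w.vtx d = P))

/-- A closed walk is convenient if the vertices can be split into two sets with
no two vertices in the same set interlaced. -/
def Convenient {n : ℕ} (w : G.ClosedWalk n) : Prop :=
  ∃ f : G.V → Bool, ∀ P Q, Interlaced w P Q → f P ≠ f Q

/-- The interlacement graph `Q(T)` of a closed walk `T`. -/
def interlacementGraph {n : ℕ} (w : G.ClosedWalk n) : SimpleGraph G.V :=
  SimpleGraph.fromRel (Interlaced w)

variable (G)

/-- An embedding of a multigraph in the plane: points for vertices, injective
continuous curves for edges, meeting only as prescribed by incidence. -/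
structure PlaneEmb where
  vmap : G.V → ℝ × ℝ
  emap : G.E → unitInterval → ℝ × ℝ
  vinj : Function.Injective vmap
  cont : ∀ e, Continuous (emap e)
  einj : ∀ e, Function.Injective (emap e)
  ends₀ : ∀ e, emap e 0 = vmap (G.ends e).1
  ends₁ : ∀ e, emap e 1 = vmap (G.ends e).2
  interior_vtx : ∀ e t, t ≠ 0 → t ≠ 1 → emap e t ∉ Set.range vmap
  edge_disj : ∀ e e', e ≠ e' → ∀ t t', emap e t = emap e' t' →
    emap e t ∈ Set.range vmap

/-- `G` is planar if it admits a plane embedding. -/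
def Planar : Prop := Nonempty (PlaneEmb G)

variable {G}

/-- The curve of a half-edge, reparametrized to start at its vertex. -/
def PlaneEmb.curve (φ : PlaneEmb G) (h : G.E × Bool) (s : unitInterval) : ℝ × ℝ :=
  φ.emap h.1 (if h.2 then s else unitInterval.symm s)

/-- The point on the circle of radius `r` around `c` at angle `θ`. -/
noncomputable def onCircle (c : ℝ × ℝ) (r θ : ℝ) : ℝ × ℝ :=
  (c.1 + r * Real.cos θ, c.2 + r * Real.sin θ)

/-- At `v`, the plane embedding `φ` makes the two pairs of the crossing
structure alternate in the cyclic order around `v`: on every sufficiently small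
circle around `v`, one can choose initial points of the four half-edge curves
appearing at angles in the alternating order pair 1, pair 2, pair 1, pair 2. -/
def PlaneEmb.AlternatingAt (φ : PlaneEmb G) (X : XStructure G) (v : G.V) : Prop :=
  ∃ r0 > 0, ∀ r, 0 < r → r < r0 →
    ∃ a b c d : G.E × Bool,
      a ≠ b ∧ a ≠ c ∧ a ≠ d ∧ b ≠ c ∧ b ≠ d ∧ c ≠ d ∧
      G.hvtx a = v ∧ G.hvtx b = v ∧ G.hvtx c = v ∧ G.hvtx d = v ∧
      X.p a = X.p c ∧ X.p b = X.p d ∧ X.p a ≠ X.p b ∧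
      ∃ θa θb θc θd : ℝ, θa < θb ∧ θb < θc ∧ θc < θd ∧ θd < θa + 2 * Real.pi ∧
      ∃ sa sb sc sd : unitInterval, sa ≠ 0 ∧ sb ≠ 0 ∧ sc ≠ 0 ∧ sd ≠ 0 ∧
        φ.curve a sa = onCircle (φ.vmap v) r θa ∧
        φ.curve b sb = onCircle (φ.vmap v) r θb ∧
        φ.curve c sc = onCircle (φ.vmap v) r θc ∧
        φ.curve d sd = onCircle (φ.vmap v) r θd ∧
        (∀ s ≤ sa, dist (φ.curve a s) (φ.vmap v) ≤ r) ∧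
        (∀ s ≤ sb, dist (φ.curve b s) (φ.vmap v) ≤ r) ∧
        (∀ s ≤ sc, dist (φ.curve c s) (φ.vmap v) ≤ r) ∧
        (∀ s ≤ sd, dist (φ.curve d s) (φ.vmap v) ≤ r)

variable (G)

/-- `G` with crossing structure `X` is X-planar: it admits a plane embedding in
which the two pairs of half-edges alternate around every vertex. -/
def XPlanar (X : XStructure G) : Prop :=
  ∃ φ : PlaneEmb G, ∀ v : G.V, φ.AlternatingAt X v

variable {G}

end Multigraph

namespace Multigraph

namespace TEC

open Equiv Equiv.Perm

variable {G : Multigraph}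

/-- reversal of a dart -/
def rev (h : G.E × Bool) : G.E × Bool := (h.1, !h.2)

lemma rev_invol : Function.Involutive (rev (G := G)) := by
  intro h; simp [rev]

@[simp] lemma rev_rev (h : G.E × Bool) : rev (rev h) = h := rev_invol h

lemma rev_ne (h : G.E × Bool) : rev h ≠ h := by
  simp [rev, Prod.ext_iff]

lemma eq_rev_of_fst_eq {x y : G.E × Bool} (h1 : x.1 = y.1) (h2 : x ≠ y) :
    y = rev x := by
  obtain ⟨e, b⟩ := x; obtain ⟨e', b'⟩ := y
  simp only [rev]
  cases h1
  refine Prod.ext rfl ?_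
  simp only [Ne, Prod.ext_iff] at h2
  cases b <;> cases b' <;> simp_all

/-- A valid matching for the crossing structure `X`. -/
structure IsMatch (X : G.XStructure) (f : G.E × Bool → G.E × Bool) : Prop where
  invol : ∀ h, f (f h) = h
  vtx : ∀ h, G.hvtx (f h) = G.hvtx h
  cross : ∀ h, X.p (f h) ≠ X.p h

lemma IsMatch.involutive {X : G.XStructure} {f : G.E × Bool → G.E × Bool}
    (hm : IsMatch X f) : Function.Involutive f := hm.invol

lemma IsMatch.inj {X : G.XStructure} {f : G.E × Bool → G.E × Bool}
    (hm : IsMatch X f) : Function.Injective f := hm.involutive.injective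

lemma IsMatch.ne {X : G.XStructure} {f : G.E × Bool → G.E × Bool}
    (hm : IsMatch X f) (h : G.E × Bool) : f h ≠ h := fun e => hm.cross h (by rw [e])

/-- The successor permutation on darts. -/
def sig (f : G.E × Bool → G.E × Bool) (hf : Function.Involutive f) :
    Equiv.Perm (G.E × Bool) :=
  (Function.Involutive.toPerm _ (rev_invol (G := G))).trans
    (Function.Involutive.toPerm f hf)

@[simp] lemma sig_apply (f : G.E × Bool → G.E × Bool) (hf : Function.Involutive f)
    (h : G.E × Bool) : sig f hf h = f (rev h) := rfl

/-- the reversal as a permutation -/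
def revP : Equiv.Perm (G.E × Bool) := Function.Involutive.toPerm _ (rev_invol (G := G))

@[simp] lemma revP_apply (h : G.E × Bool) : revP h = rev h := rfl

lemma revP_inv : (revP (G := G))⁻¹ = revP := by
  rw [Equiv.Perm.inv_def]
  exact Function.Involutive.toPerm_symm _

section Match

variable {X : G.XStructure} {f : G.E × Bool → G.E × Bool} (hm : IsMatch X f)

lemma conj_sig (hm : IsMatch X f) :
    revP * sig f hm.involutive * (revP (G := G))⁻¹ = (sig f hm.involutive)⁻¹ := by
  rw [revP_inv]
  ext y : 1
  have h1 : (revP (G := G) * sig f hm.involutive * revP (G := G)) y = rev (f y) := by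
    simp [Equiv.Perm.mul_apply]
  rw [h1, Equiv.Perm.eq_inv_iff_eq]
  simp [hm.invol]

lemma sameCycle_rev (hm : IsMatch X f) {x y : G.E × Bool}
    (h : (sig f hm.involutive).SameCycle x y) :
    (sig f hm.involutive).SameCycle (rev x) (rev y) := by
  have h2 := h.conj (g := revP)
  rw [conj_sig hm] at h2
  rw [Equiv.Perm.sameCycle_inv] at h2
  simpa using h2

lemma key_zpow (hm : IsMatch X f) (j : ℤ) (y : G.E × Bool) :
    rev ((sig f hm.involutive ^ j) y) = (sig f hm.involutive ^ (-j)) (rev y) := by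
  have h1 : revP * (sig f hm.involutive) ^ j * (revP (G := G))⁻¹
      = (sig f hm.involutive) ^ (-j) := by
    rw [← conj_zpow, conj_sig hm, inv_zpow, zpow_neg]
  have h2 := DFunLike.congr_fun h1 (rev y)
  rw [revP_inv] at h2
  simpa using h2

lemma no_selfrev (hm : IsMatch X f) (x : G.E × Bool) :
    ¬ (sig f hm.involutive).SameCycle x (rev x) := by
  set σ := sig f hm.involutive with hσ
  rintro ⟨k, hk⟩
  rcases Int.even_or_odd k with ⟨j, hj⟩ | ⟨j, hj⟩
  · have h1 : rev ((σ ^ j) x) = (σ ^ (-j)) (rev x) := key_zpow hm j x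
    rw [← hk, ← Equiv.Perm.mul_apply, ← zpow_add] at h1
    have he : -j + k = j := by omega
    rw [he] at h1
    exact rev_ne _ h1
  · have h1 : rev ((σ ^ (j + 1)) x) = (σ ^ (-(j + 1))) (rev x) := key_zpow hm (j + 1) x
    rw [← hk, ← Equiv.Perm.mul_apply, ← zpow_add] at h1
    have he : -(j + 1) + k = j := by omega
    rw [he] at h1
    have h2 : (σ ^ (j + 1)) x = rev ((σ ^ j) x) := by
      rw [← h1, rev_rev]
    have h3 : (σ ^ (j + 1)) x = σ ((σ ^ j) x) := by
      rw [add_comm, zpow_add, zpow_one, Equiv.Perm.mul_apply]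
    set y := (σ ^ j) x
    have h4 : σ y = rev y := by rw [← h3, h2]
    have h5 : f (rev y) = rev y := by
      have := h4; rwa [hσ, sig_apply] at this
    exact hm.cross (rev y) (by rw [h5])

end Match

/-- A generic reachability lemma: if `g'` agrees with `g` off `R`, and the only
point of `R` on the `g`-cycle reachable from `x` is `t`, then `g' t` is on the
`g'`-cycle of `x`. -/
lemma reach {α : Type} [Finite α] {g g' : Equiv.Perm α} {R : Set α}
    (hagree : ∀ z, z ∉ R → g' z = g z) {x t : α}
    (hxt : g.SameCycle x t)
    (huniq : ∀ z, g.SameCycle x z → z ∈ R → z = t) :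
    g'.SameCycle x (g' t) := by
  classical
  obtain ⟨k0, -, hk0⟩ := hxt.exists_pow_eq'
  have hex : ∃ k : ℕ, (g ^ k) x = t := ⟨k0, hk0⟩
  have hk : (g ^ Nat.find hex) x = t := Nat.find_spec hex
  set k := Nat.find hex with hkdef
  have step : ∀ j, j ≤ k → (g' ^ j) x = (g ^ j) x := by
    intro j hj
    induction j with
    | zero => simp
    | succ m ih =>
      have hm : (g' ^ m) x = (g ^ m) x := ih (le_of_lt (Nat.lt_of_succ_le hj))
      have hsc : g.SameCycle x ((g ^ m) x) := ⟨(m : ℤ), by rw [zpow_natCast]⟩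
      have hmk : m < k := Nat.lt_of_succ_le hj
      have hnotR : (g ^ m) x ∉ R := fun hR =>
        Nat.find_min hex hmk (huniq _ hsc hR)
      calc (g' ^ (m + 1)) x = g' ((g' ^ m) x) := by
            rw [pow_succ', Equiv.Perm.mul_apply]
        _ = g' ((g ^ m) x) := by rw [hm]
        _ = g ((g ^ m) x) := hagree _ hnotR
        _ = (g ^ (m + 1)) x := by rw [pow_succ', Equiv.Perm.mul_apply]
  have hfin : (g' ^ (k + 1)) x = g' t := by
    rw [pow_succ', Equiv.Perm.mul_apply, step k le_rfl, hk]
  exact ⟨((k : ℤ) + 1), by rw [← hfin]; push_cast [zpow_natCast]; rfl⟩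

section Qset

variable {X : G.XStructure} {f : G.E × Bool → G.E × Bool}

/-- darts in the circuit pair of `d0` -/
def Qd (f : G.E × Bool → G.E × Bool) (hf : Function.Involutive f)
    (d0 : G.E × Bool) : Set (G.E × Bool) :=
  {x | (sig f hf).SameCycle d0 x ∨ (sig f hf).SameCycle (rev d0) x}

lemma Qd_mem_iff {hf : Function.Involutive f} {d0 x : G.E × Bool} :
    x ∈ Qd f hf d0 ↔
      ((sig f hf).SameCycle d0 x ∨ (sig f hf).SameCycle (rev d0) x) := Iff.rfl

lemma Qd_self (hm : IsMatch X f) (d0 : G.E × Bool) :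
    d0 ∈ Qd f hm.involutive d0 := Or.inl (Equiv.Perm.SameCycle.refl _ _)

lemma Qd_sameCycle (hm : IsMatch X f) (d0 : G.E × Bool) {x y : G.E × Bool}
    (hx : x ∈ Qd f hm.involutive d0)
    (hxy : (sig f hm.involutive).SameCycle x y) : y ∈ Qd f hm.involutive d0 := by
  rcases hx with h | h
  · exact Or.inl (h.trans hxy)
  · exact Or.inr (h.trans hxy)

lemma Qd_rev (hm : IsMatch X f) (d0 : G.E × Bool) {x : G.E × Bool}
    (hx : x ∈ Qd f hm.involutive d0) : rev x ∈ Qd f hm.involutive d0 := by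
  rcases hx with h | h
  · exact Or.inr (sameCycle_rev hm h)
  · exact Or.inl (by simpa using sameCycle_rev hm h)

end Qset

/-- existence of a valid matching -/
lemma matchExists (X : G.XStructure) : ∃ f, IsMatch X f := by
  classical
  have hex : ∀ v : G.V, ∃ x y u w : G.E × Bool, x ≠ y ∧ u ≠ w ∧
      {h | G.hvtx h = v ∧ X.p h = true} = {x, y} ∧
      {h | G.hvtx h = v ∧ X.p h = false} = {u, w} := by
    intro v
    obtain ⟨x, y, hxy, hA⟩ := Set.ncard_eq_two.mp (X.pairs v true)
    obtain ⟨u, w, huw, hB⟩ := Set.ncard_eq_two.mp (X.pairs v false)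
    exact ⟨x, y, u, w, hxy, huw, hA, hB⟩
  choose xF yF uF wF hxy huw hA hB using hex
  have hxm : ∀ v, G.hvtx (xF v) = v ∧ X.p (xF v) = true := by
    intro v
    have : xF v ∈ {h | G.hvtx h = v ∧ X.p h = true} := by
      rw [hA v]; exact Set.mem_insert _ _
    exact this
  have hym : ∀ v, G.hvtx (yF v) = v ∧ X.p (yF v) = true := by
    intro v
    have : yF v ∈ {h | G.hvtx h = v ∧ X.p h = true} := by
      rw [hA v]; exact Set.mem_insert_of_mem _ rfl
    exact this
  have hum : ∀ v, G.hvtx (uF v) = v ∧ X.p (uF v) = false := by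
    intro v
    have : uF v ∈ {h | G.hvtx h = v ∧ X.p h = false} := by
      rw [hB v]; exact Set.mem_insert _ _
    exact this
  have hwm : ∀ v, G.hvtx (wF v) = v ∧ X.p (wF v) = false := by
    intro v
    have : wF v ∈ {h | G.hvtx h = v ∧ X.p h = false} := by
      rw [hB v]; exact Set.mem_insert_of_mem _ rfl
    exact this
  have hpne : ∀ (x y : G.E × Bool), X.p x = true → X.p y = false → x ≠ y := by
    intro x y hx hy e; rw [e, hy] at hx; cases hx
  set F : (G.E × Bool) → (G.E × Bool) := fun h =>
    if h = xF (G.hvtx h) then uF (G.hvtx h)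
    else if h = yF (G.hvtx h) then wF (G.hvtx h)
    else if h = uF (G.hvtx h) then xF (G.hvtx h)
    else yF (G.hvtx h) with hF
  have Fx : ∀ v, F (xF v) = uF v := by
    intro v
    have h1 : G.hvtx (xF v) = v := (hxm v).1
    simp only [hF]
    rw [h1]
    simp
  have Fy : ∀ v, F (yF v) = wF v := by
    intro v
    have h1 : G.hvtx (yF v) = v := (hym v).1
    simp only [hF]
    rw [h1]
    simp [(hxy v).symm]
  have Fu : ∀ v, F (uF v) = xF v := by
    intro v
    have h1 : G.hvtx (uF v) = v := (hum v).1
    simp only [hF]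
    rw [h1]
    simp [(hpne _ _ (hxm v).2 (hum v).2).symm, (hpne _ _ (hym v).2 (hum v).2).symm]
  have Fw : ∀ v, F (wF v) = yF v := by
    intro v
    have h1 : G.hvtx (wF v) = v := (hwm v).1
    simp only [hF]
    rw [h1]
    simp [(hpne _ _ (hxm v).2 (hwm v).2).symm, (hpne _ _ (hym v).2 (hwm v).2).symm,
      (huw v).symm]
  have hcov : ∀ h : G.E × Bool, ∀ v, G.hvtx h = v →
      h = xF v ∨ h = yF v ∨ h = uF v ∨ h = wF v := by
    intro h v hv
    rcases Bool.eq_false_or_eq_true (X.p h) with hp | hp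
    · have : h ∈ {h | G.hvtx h = v ∧ X.p h = true} := ⟨hv, hp⟩
      rw [hA v] at this
      rcases this with h1 | h1
      · exact Or.inl h1
      · exact Or.inr (Or.inl h1)
    · have : h ∈ {h | G.hvtx h = v ∧ X.p h = false} := ⟨hv, hp⟩
      rw [hB v] at this
      rcases this with h1 | h1
      · exact Or.inr (Or.inr (Or.inl h1))
      · exact Or.inr (Or.inr (Or.inr h1))
  refine ⟨F, ?_, ?_, ?_⟩
  · intro h
    rcases hcov h (G.hvtx h) rfl with hc | hc | hc | hc
    · rw [hc, Fx, Fu]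
    · rw [hc, Fy, Fw]
    · rw [hc, Fu, Fx]
    · rw [hc, Fw, Fy]
  · intro h
    rcases hcov h (G.hvtx h) rfl with hc | hc | hc | hc
    · rw [hc, Fx, (hum _).1, (hxm _).1]
    · rw [hc, Fy, (hwm _).1, (hym _).1]
    · rw [hc, Fu, (hxm _).1, (hum _).1]
    · rw [hc, Fw, (hym _).1, (hwm _).1]
  · intro h
    rcases hcov h (G.hvtx h) rfl with hc | hc | hc | hc
    · rw [hc, Fx, (hum _).2, (hxm _).2]; simp
    · rw [hc, Fy, (hwm _).2, (hym _).2]; simp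
    · rw [hc, Fu, (hxm _).2, (hum _).2]; simp
    · rw [hc, Fw, (hym _).2, (hwm _).2]; simp

/-- boundary vertex existence from connectivity -/
lemma boundary (hconn : G.Conn) {Q : Set (G.E × Bool)}
    (hQrev : ∀ x ∈ Q, rev x ∈ Q)
    {d0 x0 : G.E × Bool} (hd0 : d0 ∈ Q) (hx0 : x0 ∉ Q) :
    ∃ h h', G.hvtx h' = G.hvtx h ∧ h ∈ Q ∧ h' ∉ Q := by
  by_contra hno
  push_neg at hno
  have main : ∀ w, Relation.ReflTransGen G.adj (G.hvtx d0) w →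
      ∀ h, G.hvtx h = w → h ∈ Q := by
    intro w hw
    induction hw with
    | refl => intro h hh; exact hno d0 h (by rw [hh]) hd0
    | @tail b c _ hbc ih =>
      obtain ⟨e, he | he⟩ := hbc
      · have h1 : G.hvtx (e, true) = b := by simp [Multigraph.hvtx, he]
        have h2 : G.hvtx (e, false) = c := by simp [Multigraph.hvtx, he]
        have h3 : (e, true) ∈ Q := ih _ h1
        have h4 : (e, false) ∈ Q := by
          have := hQrev _ h3
          simpa [rev] using this
        intro h hh
        exact hno (e, false) h (by rw [hh, h2]) h4
      · have h1 : G.hvtx (e, false) = b := by simp [Multigraph.hvtx, he]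
        have h2 : G.hvtx (e, true) = c := by simp [Multigraph.hvtx, he]
        have h3 : (e, false) ∈ Q := ih _ h1
        have h4 : (e, true) ∈ Q := by
          have := hQrev _ h3
          simpa [rev] using this
        intro h hh
        exact hno (e, true) h (by rw [hh, h2]) h4
  exact hx0 (main _ (hconn _ _) x0 rfl)

/-- the merging step: a boundary vertex lets us enlarge the circuit pair of `d0` -/
lemma improve [Finite G.E] {X : G.XStructure} {f : G.E × Bool → G.E × Bool}
    (hm : IsMatch X f) (d0 h h' : G.E × Bool)
    (hv : G.hvtx h' = G.hvtx h)
    (hQ : h ∈ Qd f hm.involutive d0) (hQ' : h' ∉ Qd f hm.involutive d0) :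
    ∃ (f' : G.E × Bool → G.E × Bool) (hm' : IsMatch X f'),
      (∀ x, x ∈ Qd f hm.involutive d0 → x ∈ Qd f' hm'.involutive d0) ∧
      h' ∈ Qd f' hm'.involutive d0 := by
  classical
  have QsameC : ∀ {x y}, x ∈ Qd f hm.involutive d0 →
      (sig f hm.involutive).SameCycle x y → y ∈ Qd f hm.involutive d0 :=
    fun hx hxy => Qd_sameCycle hm d0 hx hxy
  have Qrev : ∀ {x}, x ∈ Qd f hm.involutive d0 → rev x ∈ Qd f hm.involutive d0 :=
    fun hx => Qd_rev hm d0 hx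
  have Qrev' : ∀ {x}, rev x ∈ Qd f hm.involutive d0 → x ∈ Qd f hm.involutive d0 :=
    fun hx => by simpa using Qrev hx
  have QsameC' : ∀ {x y}, y ∈ Qd f hm.involutive d0 →
      (sig f hm.involutive).SameCycle x y → x ∈ Qd f hm.involutive d0 :=
    fun hy hxy => QsameC hy hxy.symm
  have Qf : ∀ {x}, x ∈ Qd f hm.involutive d0 → f x ∈ Qd f hm.involutive d0 := by
    intro x hx
    have hs : (sig f hm.involutive).SameCycle (rev x) (f x) := ⟨1, by simp⟩
    exact QsameC (Qrev hx) hs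
  have Qf' : ∀ {x}, f x ∈ Qd f hm.involutive d0 → x ∈ Qd f hm.involutive d0 := by
    intro x hx
    have := Qf hx
    rwa [hm.invol] at this
  have pick : ∀ x : G.E × Bool, ∃ a, X.p a = true ∧ (a = x ∨ a = f x) := by
    intro x
    by_cases hp : X.p x = true
    · exact ⟨x, hp, Or.inl rfl⟩
    · refine ⟨f x, ?_, Or.inr rfl⟩
      have hc := hm.cross x
      revert hc hp
      cases hpx : X.p x <;> cases hpfx : X.p (f x) <;> simp
  obtain ⟨a1, pa1, hc1⟩ := pick h
  obtain ⟨a2, pa2, hc2⟩ := pick h'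
  have Qa1 : a1 ∈ Qd f hm.involutive d0 := by
    rcases hc1 with rfl | rfl
    · exact hQ
    · exact Qf hQ
  have Qa2 : a2 ∉ Qd f hm.involutive d0 := by
    rcases hc2 with rfl | rfl
    · exact hQ'
    · exact fun hx => hQ' (Qf' hx)
  have va1 : G.hvtx a1 = G.hvtx h := by
    rcases hc1 with rfl | rfl
    · rfl
    · exact hm.vtx h
  have va2 : G.hvtx a2 = G.hvtx h := by
    rcases hc2 with rfl | rfl
    · exact hv
    · rw [hm.vtx h']; exact hv
  have hlink : (sig f hm.involutive).SameCycle a2 h' ∨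
      (sig f hm.involutive).SameCycle (rev a2) h' := by
    rcases hc2 with rfl | rfl
    · exact Or.inl (Equiv.Perm.SameCycle.refl _ _)
    · refine Or.inr ⟨1, ?_⟩
      simp [hm.invol]
  have hne12 : a1 ≠ a2 := fun e => Qa2 (e ▸ Qa1)
  have hnef : f a1 ≠ f a2 := fun e => hne12 (hm.inj e)
  have pfa1 : X.p (f a1) = false := by
    have hc := hm.cross a1; rw [pa1] at hc; simpa using hc
  have pfa2 : X.p (f a2) = false := by
    have hc := hm.cross a2; rw [pa2] at hc; simpa using hc
  have hpne : ∀ (x y : G.E × Bool), X.p x = true → X.p y = false → x ≠ y := by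
    intro x y hx hy e; rw [e, hy] at hx; cases hx
  have ne11 : a1 ≠ f a1 := hpne _ _ pa1 pfa1
  have ne12 : a1 ≠ f a2 := hpne _ _ pa1 pfa2
  have ne21 : a2 ≠ f a1 := hpne _ _ pa2 pfa1
  have ne22 : a2 ≠ f a2 := hpne _ _ pa2 pfa2
  have Qfa1 : f a1 ∈ Qd f hm.involutive d0 := Qf Qa1
  have Qfa2 : f a2 ∉ Qd f hm.involutive d0 := fun hx => Qa2 (Qf' hx)
  have Qra1 : rev a1 ∈ Qd f hm.involutive d0 := Qrev Qa1
  have Qra2 : rev a2 ∉ Qd f hm.involutive d0 := fun hx => Qa2 (Qrev' hx)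
  have Qrfa1 : rev (f a1) ∈ Qd f hm.involutive d0 := Qrev Qfa1
  have Qrfa2 : rev (f a2) ∉ Qd f hm.involutive d0 := fun hx => Qfa2 (Qrev' hx)
  set f' : G.E × Bool → G.E × Bool := fun z =>
    if z = a1 then f a2 else if z = a2 then f a1
    else if z = f a1 then a2 else if z = f a2 then a1 else f z with hf'
  have F1 : f' a1 = f a2 := by simp [hf']
  have F2 : f' a2 = f a1 := by simp [hf', hne12.symm]
  have F3 : f' (f a1) = a2 := by simp [hf', ne11.symm, ne21.symm]
  have F4 : f' (f a2) = a1 := by simp [hf', ne12.symm, ne22.symm, hnef.symm]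
  have F5 : ∀ z, z ≠ a1 → z ≠ a2 → z ≠ f a1 → z ≠ f a2 → f' z = f z := by
    intro z h1 h2 h3 h4; simp [hf', h1, h2, h3, h4]
  have hm' : IsMatch X f' := by
    refine ⟨?_, ?_, ?_⟩
    · intro z
      by_cases e1 : z = a1
      · rw [e1, F1, F4]
      by_cases e2 : z = a2
      · rw [e2, F2, F3]
      by_cases e3 : z = f a1
      · rw [e3, F3, F2]
      by_cases e4 : z = f a2
      · rw [e4, F4, F1]
      · rw [F5 z e1 e2 e3 e4]
        have g1 : f z ≠ a1 := fun e => e3 (by rw [← e, hm.invol])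
        have g2 : f z ≠ a2 := fun e => e4 (by rw [← e, hm.invol])
        have g3 : f z ≠ f a1 := fun e => e1 (hm.inj e)
        have g4 : f z ≠ f a2 := fun e => e2 (hm.inj e)
        rw [F5 _ g1 g2 g3 g4, hm.invol]
    · intro z
      have w1 : G.hvtx (f a1) = G.hvtx h := by rw [hm.vtx]; exact va1
      have w2 : G.hvtx (f a2) = G.hvtx h := by rw [hm.vtx]; exact va2
      by_cases e1 : z = a1
      · rw [e1, F1, w2, va1]
      by_cases e2 : z = a2
      · rw [e2, F2, w1, va2]
      by_cases e3 : z = f a1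
      · rw [e3, F3, va2, w1]
      by_cases e4 : z = f a2
      · rw [e4, F4, va1, w2]
      · rw [F5 z e1 e2 e3 e4, hm.vtx]
    · intro z
      by_cases e1 : z = a1
      · rw [e1, F1, pfa2, pa1]; simp
      by_cases e2 : z = a2
      · rw [e2, F2, pfa1, pa2]; simp
      by_cases e3 : z = f a1
      · rw [e3, F3, pa2, pfa1]; simp
      by_cases e4 : z = f a2
      · rw [e4, F4, pa1, pfa2]; simp
      · rw [F5 z e1 e2 e3 e4]; exact hm.cross z
  set σ := sig f hm.involutive with hσ
  set σ' := sig f' hm'.involutive with hσ'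
  set R : Set (G.E × Bool) := {rev a1, rev a2, rev (f a1), rev (f a2)} with hR
  have hRmem : ∀ z, z ∈ R →
      z = rev a1 ∨ z = rev a2 ∨ z = rev (f a1) ∨ z = rev (f a2) := by
    intro z hz
    simpa [hR] using hz
  have hagree : ∀ z, z ∉ R → σ' z = σ z := by
    intro z hz
    have mem : ∀ w : G.E × Bool, z = rev w → z ∈ R → False := fun w hw hmem => hz hmem
    have g1 : rev z ≠ a1 := by
      intro e
      exact hz (by rw [show z = rev a1 by rw [← e, rev_rev]]; simp [hR])
    have g2 : rev z ≠ a2 := by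
      intro e
      exact hz (by rw [show z = rev a2 by rw [← e, rev_rev]]; simp [hR])
    have g3 : rev z ≠ f a1 := by
      intro e
      exact hz (by rw [show z = rev (f a1) by rw [← e, rev_rev]]; simp [hR])
    have g4 : rev z ≠ f a2 := by
      intro e
      exact hz (by rw [show z = rev (f a2) by rw [← e, rev_rev]]; simp [hR])
    show f' (rev z) = f (rev z)
    exact F5 _ g1 g2 g3 g4
  have V1 : σ' (rev (f a1)) = a2 := by
    show f' (rev (rev (f a1))) = a2
    rw [rev_rev, F3]
  have V2 : σ' (rev (f a2)) = a1 := by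
    show f' (rev (rev (f a2))) = a1
    rw [rev_rev, F4]
  have V3 : σ' (rev a1) = f a2 := by
    show f' (rev (rev a1)) = f a2
    rw [rev_rev, F1]
  have V4 : σ' (rev a2) = f a1 := by
    show f' (rev (rev a2)) = f a1
    rw [rev_rev, F2]
  have s1 : σ.SameCycle (rev (f a1)) a1 := ⟨1, by simp [hσ, hm.invol]⟩
  have s2 : σ.SameCycle (rev (f a2)) a2 := ⟨1, by simp [hσ, hm.invol]⟩
  have s3 : σ.SameCycle (rev a1) (f a1) := ⟨1, by simp [hσ]⟩
  have s4 : σ.SameCycle (rev a2) (f a2) := ⟨1, by simp [hσ]⟩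
  have nsr : ∀ x, ¬ σ.SameCycle x (rev x) := no_selfrev hm
  have r1 : ∀ x, σ.SameCycle a1 x → σ'.SameCycle x a2 := by
    intro x hx
    have hxt : σ.SameCycle x (rev (f a1)) := hx.symm.trans s1.symm
    have hu : ∀ z, σ.SameCycle x z → z ∈ R → z = rev (f a1) := by
      intro z hz hzR
      have hz1 : σ.SameCycle a1 z := hx.trans hz
      rcases hRmem z hzR with rfl | rfl | rfl | rfl
      · exact absurd hz1 (nsr a1)
      · exact absurd (QsameC Qa1 hz1) Qra2
      · rfl
      · exact absurd (QsameC Qa1 hz1) Qrfa2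
    have := reach hagree hxt hu
    rwa [V1] at this
  have r2 : ∀ x, σ.SameCycle a2 x → σ'.SameCycle x a1 := by
    intro x hx
    have hxt : σ.SameCycle x (rev (f a2)) := hx.symm.trans s2.symm
    have hu : ∀ z, σ.SameCycle x z → z ∈ R → z = rev (f a2) := by
      intro z hz hzR
      have hz1 : σ.SameCycle a2 z := hx.trans hz
      rcases hRmem z hzR with rfl | rfl | rfl | rfl
      · exact absurd (QsameC' Qra1 hz1) Qa2
      · exact absurd hz1 (nsr a2)
      · exact absurd (QsameC' Qrfa1 hz1) Qa2
      · rfl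
    have := reach hagree hxt hu
    rwa [V2] at this
  have r3 : ∀ x, σ.SameCycle (rev a1) x → σ'.SameCycle x (f a2) := by
    intro x hx
    have hxt : σ.SameCycle x (rev a1) := hx.symm
    have hu : ∀ z, σ.SameCycle x z → z ∈ R → z = rev a1 := by
      intro z hz hzR
      have hz1 : σ.SameCycle (rev a1) z := hx.trans hz
      rcases hRmem z hzR with rfl | rfl | rfl | rfl
      · rfl
      · exact absurd (QsameC Qra1 hz1) Qra2
      · exact absurd (s3.symm.trans hz1) (nsr (f a1))
      · exact absurd (QsameC Qra1 hz1) Qrfa2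
    have := reach hagree hxt hu
    rwa [V3] at this
  have r4 : ∀ x, σ.SameCycle (rev a2) x → σ'.SameCycle x (f a1) := by
    intro x hx
    have hxt : σ.SameCycle x (rev a2) := hx.symm
    have hu : ∀ z, σ.SameCycle x z → z ∈ R → z = rev a2 := by
      intro z hz hzR
      have hz1 : σ.SameCycle (rev a2) z := hx.trans hz
      rcases hRmem z hzR with rfl | rfl | rfl | rfl
      · exact absurd (QsameC' Qra1 hz1) Qra2
      · rfl
      · exact absurd (QsameC' Qrfa1 hz1) Qra2
      · exact absurd (s4.symm.trans hz1) (nsr (f a2))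
    have := reach hagree hxt hu
    rwa [V4] at this
  have L1 : σ'.SameCycle a1 a2 := r1 a1 (Equiv.Perm.SameCycle.refl _ _)
  have L2 : σ'.SameCycle (rev a1) (f a2) := r3 _ (Equiv.Perm.SameCycle.refl _ _)
  have L3 : σ'.SameCycle (f a1) (f a2) := r3 (f a1) s3
  have KEY : ∀ x, (σ.SameCycle a1 x ∨ σ.SameCycle (rev a1) x ∨
      σ.SameCycle a2 x ∨ σ.SameCycle (rev a2) x) →
      (σ'.SameCycle a1 x ∨ σ'.SameCycle (rev a1) x) := by
    rintro x (hx | hx | hx | hx)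
    · exact Or.inl (L1.trans (r1 x hx).symm)
    · exact Or.inr (L2.trans (r3 x hx).symm)
    · exact Or.inl ((r2 x hx).symm)
    · exact Or.inr (L2.trans (L3.symm.trans (r4 x hx).symm))
  have QtoPair : ∀ x, x ∈ Qd f hm.involutive d0 →
      σ.SameCycle a1 x ∨ σ.SameCycle (rev a1) x := by
    intro x hx
    rcases Qa1 with hA | hA
    · rcases hx with hB | hB
      · exact Or.inl (hA.symm.trans hB)
      · exact Or.inr ((sameCycle_rev hm hA).symm.trans hB)
    · rcases hx with hB | hB
      · exact Or.inr ((show σ.SameCycle d0 (rev a1) by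
          simpa using sameCycle_rev hm hA).symm.trans hB)
      · exact Or.inl (hA.symm.trans hB)
  have d0base : σ'.SameCycle a1 d0 ∨ σ'.SameCycle (rev a1) d0 := by
    rcases QtoPair d0 (Qd_self hm d0) with hA | hA
    · exact KEY d0 (Or.inl hA)
    · exact KEY d0 (Or.inr (Or.inl hA))
  have srev' : ∀ {u v : G.E × Bool}, σ'.SameCycle u v → σ'.SameCycle (rev u) (rev v) :=
    fun hx => sameCycle_rev hm' hx
  have final : ∀ x, (σ.SameCycle a1 x ∨ σ.SameCycle (rev a1) x ∨
      σ.SameCycle a2 x ∨ σ.SameCycle (rev a2) x) → x ∈ Qd f' hm'.involutive d0 := by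
    intro x hx
    have hx' := KEY x hx
    rcases d0base with hd | hd
    · rcases hx' with h1 | h1
      · exact Or.inl (hd.symm.trans h1)
      · exact Or.inr ((srev' hd).symm.trans h1)
    · rcases hx' with h1 | h1
      · exact Or.inr (by simpa using srev' (hd.symm.trans (srev' h1)))
      · exact Or.inl (hd.symm.trans h1)
  refine ⟨f', hm', ?_, ?_⟩
  · intro x hx
    rcases QtoPair x hx with hA | hA
    · exact final x (Or.inl hA)
    · exact final x (Or.inr (Or.inl hA))
  · rcases hlink with hA | hA
    · exact final h' (Or.inr (Or.inr (Or.inl hA)))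
    · exact final h' (Or.inr (Or.inr (Or.inr hA)))

/-- from a spanning circuit pair to a turning Eulerian circuit -/
lemma build [Finite G.E] {X : G.XStructure} {f : G.E × Bool → G.E × Bool}
    (hm : IsMatch X f) (d0 : G.E × Bool)
    (hall : ∀ x, x ∈ Qd f hm.involutive d0) :
    ∃ n : ℕ, 0 < n ∧ ∃ w : G.ClosedWalk n, w.IsEulerian ∧ Turning X w := by
  classical
  set σ := sig f hm.involutive with hσ
  haveI := Fintype.ofFinite (G.E × Bool)
  have hper : ∃ m : ℕ, 0 < m ∧ (σ ^ m) d0 = d0 := by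
    refine ⟨orderOf σ, orderOf_pos σ, ?_⟩
    rw [pow_orderOf_eq_one]
    rfl
  obtain ⟨hnpos, hcyc⟩ := Nat.find_spec hper
  set n := Nat.find hper with hn
  haveI : NeZero n := ⟨Nat.pos_iff_ne_zero.mp hnpos⟩
  have hmulpow : ∀ q : ℕ, ((σ ^ n) ^ q) d0 = d0 := by
    intro q
    induction q with
    | zero => simp
    | succ m ih => rw [pow_succ, Equiv.Perm.mul_apply, hcyc, ih]
  have hmod : ∀ k : ℕ, (σ ^ k) d0 = (σ ^ (k % n)) d0 := by
    intro k
    conv_lhs => rw [← Nat.mod_add_div k n]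
    rw [pow_add, Equiv.Perm.mul_apply, pow_mul, hmulpow]
  have hkey : ∀ a b, a < b → b < n → (σ ^ a) d0 = (σ ^ b) d0 → False := by
    intro a b hab hb heq
    have h1 : (σ ^ (n - b + a)) d0 = d0 := by
      have h2 : (σ ^ (n - b)) ((σ ^ a) d0) = (σ ^ (n - b)) ((σ ^ b) d0) := by rw [heq]
      rw [← Equiv.Perm.mul_apply, ← pow_add, ← Equiv.Perm.mul_apply, ← pow_add] at h2
      rw [show n - b + b = n from Nat.sub_add_cancel hb.le, hcyc] at h2
      exact h2
    have hlt : n - b + a < n := by omega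
    have hpos2 : 0 < n - b + a := by omega
    exact Nat.find_min hper hlt ⟨hpos2, h1⟩
  have hinj : ∀ a b, a < n → b < n → (σ ^ a) d0 = (σ ^ b) d0 → a = b := by
    intro a b ha hb heq
    rcases Nat.lt_trichotomy a b with hab | hab | hab
    · exact absurd (hkey a b hab hb heq) not_false
    · exact hab
    · exact absurd (hkey b a hab ha heq.symm) not_false
  have hstep : ∀ i : ZMod n, (σ ^ (i + 1).val) d0 = σ ((σ ^ i.val) d0) := by
    intro i
    have h0 : ((i.val : ℕ) : ZMod n) = i := ZMod.natCast_rightInverse i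
    have h1 : ((i + 1 : ZMod n)).val = (i.val + 1) % n := by
      rw [show (i + 1 : ZMod n) = ((i.val + 1 : ℕ) : ZMod n) by
        rw [Nat.cast_add, Nat.cast_one, h0], ZMod.val_natCast]
    rw [h1, ← hmod (i.val + 1), pow_succ', Equiv.Perm.mul_apply]
  refine ⟨n, hnpos, ⟨fun i => (σ ^ i.val) d0, ?_⟩, ?_, ?_⟩
  · intro i
    show G.hvtx ((σ ^ (i + 1).val) d0) = _
    rw [hstep i]
    show G.hvtx (f (rev ((σ ^ i.val) d0))) = _
    rw [hm.vtx]
    rfl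
  · intro e
    have hex2 : ∃ k, k < n ∧ ((σ ^ k) d0).1 = e := by
      rcases hall (e, true) with hA | hA
      · obtain ⟨k0, -, hk0⟩ := hA.exists_pow_eq'
        exact ⟨k0 % n, Nat.mod_lt _ hnpos, by rw [← hmod, hk0]⟩
      · have hB : σ.SameCycle d0 (e, false) := by
          have := sameCycle_rev hm hA
          simpa [rev] using this
        obtain ⟨k0, -, hk0⟩ := hB.exists_pow_eq'
        exact ⟨k0 % n, Nat.mod_lt _ hnpos, by rw [← hmod, hk0]⟩
    obtain ⟨k, hk, hke⟩ := hex2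
    have hkval : ((k : ZMod n)).val = k := by
      rw [ZMod.val_natCast, Nat.mod_eq_of_lt hk]
    refine ⟨(k : ZMod n), ?_, ?_⟩
    · show ((σ ^ ((k : ZMod n)).val) d0).1 = e
      rw [hkval]
      exact hke
    · intro j hj
      have hj' : ((σ ^ j.val) d0).1 = e := hj
      by_cases hxyeq : (σ ^ j.val) d0 = (σ ^ ((k : ZMod n)).val) d0
      · have := hinj j.val ((k : ZMod n)).val (ZMod.val_lt j) (ZMod.val_lt _) hxyeq
        exact ZMod.val_injective n this
      · exfalso
        have hfst : ((σ ^ j.val) d0).1 = ((σ ^ ((k : ZMod n)).val) d0).1 := by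
          rw [hj', hkval, hke]
        have hy : (σ ^ ((k : ZMod n)).val) d0 = rev ((σ ^ j.val) d0) :=
          eq_rev_of_fst_eq hfst hxyeq
        have hs1 : σ.SameCycle d0 ((σ ^ j.val) d0) := ⟨(j.val : ℤ), by rw [zpow_natCast]⟩
        have hs2 : σ.SameCycle d0 ((σ ^ ((k : ZMod n)).val) d0) :=
          ⟨(((k : ZMod n)).val : ℤ), by rw [zpow_natCast]⟩
        have hs : σ.SameCycle ((σ ^ j.val) d0) (rev ((σ ^ j.val) d0)) := by
          rw [← hy]
          exact hs1.symm.trans hs2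
        exact no_selfrev hm _ hs
  · intro i
    have hd : (σ ^ i.val) d0 = σ ((σ ^ (i - 1).val) d0) := by
      have h2 := hstep (i - 1)
      rwa [sub_add_cancel] at h2
    show X.p (((σ ^ (i - 1).val) d0).1, !((σ ^ (i - 1).val) d0).2) ≠
      X.p ((σ ^ i.val) d0)
    rw [hd]
    show X.p (rev ((σ ^ (i - 1).val) d0)) ≠ X.p (f (rev ((σ ^ (i - 1).val) d0)))
    exact fun e => hm.cross (rev ((σ ^ (i - 1).val) d0)) e.symm

end TEC

end Multigraph

open Multigraph in
/-- Every connected X-graph admits a turning Eulerian circuit. -/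
theorem statement1 (G : Multigraph) [Finite G.V] [Finite G.E] [Nonempty G.V]
    (X : G.XStructure) (hreg : G.FourRegular) (hconn : G.Conn) :
    ∃ n : ℕ, 0 < n ∧ ∃ w : G.ClosedWalk n, w.IsEulerian ∧ Turning X w := by
  classical
  obtain ⟨f0, hm0⟩ := TEC.matchExists X
  have v0 : G.V := Classical.arbitrary G.V
  have hne : {h : G.E × Bool | G.hvtx h = v0 ∧ X.p h = true}.Nonempty := by
    apply Set.nonempty_of_ncard_ne_zero
    rw [X.pairs v0 true]
    omega
  obtain ⟨d0, -⟩ := hne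
  let M := {f : G.E × Bool → G.E × Bool // TEC.IsMatch X f}
  haveI : Nonempty M := ⟨⟨f0, hm0⟩⟩
  haveI : Finite (G.E × Bool → G.E × Bool) := Pi.finite
  haveI : Finite M := Subtype.finite
  obtain ⟨fm, hmax⟩ := Finite.exists_max
      (fun m : M => {e : G.E | (e, true) ∈ TEC.Qd m.1 m.2.involutive d0}.ncard)
  have hall : ∀ x, x ∈ TEC.Qd fm.1 fm.2.involutive d0 := by
    by_contra hc
    push_neg at hc
    obtain ⟨x0, hx0⟩ := hc
    obtain ⟨h, h', hv, hQ, hQ'⟩ := TEC.boundary hconn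
      (fun x hx => TEC.Qd_rev fm.2 d0 hx) (TEC.Qd_self fm.2 d0) hx0
    obtain ⟨f', hm', hmono, hnew⟩ := TEC.improve fm.2 d0 h h' hv hQ hQ'
    obtain ⟨e', b'⟩ := h'
    have hQ'e : (e', true) ∈ TEC.Qd f' hm'.involutive d0 := by
      cases b'
      · have h3 := TEC.Qd_rev hm' d0 hnew
        simpa [TEC.rev] using h3
      · exact hnew
    have hnotS : e' ∉ {e : G.E | (e, true) ∈ TEC.Qd fm.1 fm.2.involutive d0} := by
      intro hmem
      apply hQ'
      cases b'
      · have h3 := TEC.Qd_rev fm.2 d0 hmem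
        simpa [TEC.rev] using h3
      · exact hmem
    have hsub : {e : G.E | (e, true) ∈ TEC.Qd fm.1 fm.2.involutive d0} ⊂
        {e : G.E | (e, true) ∈ TEC.Qd f' hm'.involutive d0} := by
      constructor
      · intro e he
        exact hmono _ he
      · intro hcon
        exact hnotS (hcon hQ'e)
    have hlt := Set.ncard_lt_ncard hsub (Set.toFinite _)
    have hle := hmax ⟨f', hm'⟩
    simp only at hle
    omega
  exact TEC.build fm.2 d0 hall
end

section
/- Let G be an X-graph that contains no two edge-disjoint simple cycles having exactly one crossing vertex. Then every turning Eulerian circuit T of G is strongly turning: traversing T in a fixed direction, the two entries of T into any vertex use half-edges of the same pair of the partition at that vertex. -/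
/-!
Suppose the two passages of `T` through `v` enter along different pairs. As `T` is turning, the
arc of `T` from one passage to the other is a closed walk leaving `v` along the pair it entered
by, and the complementary arc does the same with the other pair. Cutting out loops turns each arc
into a simple cycle through `v` on its half-edges; the two cycles are edge-disjoint and cross at
`v`. Since `G` is 4-regular, `T` passes every vertex at most twice, so at any other common vertex
`u` one of the arcs passes only once, and the cycle on it passes `u` exactly as `T` does, turning.
Hence `v` is their only crossing vertex.
-/

namespace ZMod

variable {n : ℕ}

theorem val_add_one_eq_or {d : ℕ} [NeZero d] (k : ZMod d) :
    (k + 1).val = k.val + 1 ∨ (k + 1).val = 0 ∧ k.val + 1 = d := by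
  have hk : k + 1 = ((k.val + 1 : ℕ) : ZMod d) := by push_cast; rw [natCast_zmod_val]
  rcases (Nat.add_one_le_of_lt k.val_lt).lt_or_eq with h | h
  · exact .inl (by rw [hk, val_cast_of_lt h])
  · exact .inr ⟨by rw [hk, h, natCast_self, val_zero], h⟩

theorem natCast_inj_of_lt {x y : ℕ} (hx : x < n) (hy : y < n) (h : (x : ZMod n) = y) : x = y := by
  rw [← val_cast_of_lt hx, ← val_cast_of_lt hy, h]

theorem neZero_val_sub {a b : ZMod n} (h : a ≠ b) : NeZero (b - a).val :=
  ⟨(val_ne_zero _).mpr (sub_ne_zero.mpr h.symm)⟩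

variable [NeZero n] {a b : ZMod n}

theorem val_sub_add_val_sub (h : a ≠ b) : (b - a).val + (a - b).val = n := by
  have : NeZero (a - b) := ⟨sub_ne_zero.mpr h⟩
  rw [← neg_sub, val_neg_of_ne_zero]
  have := (a - b).val_lt
  omega

theorem val_sub_lt_or (h : a ≠ b) (s : ZMod n) :
    (s - a).val < (b - a).val ∨ (s - b).val < (a - b).val := by
  by_contra! hs
  have hsum := val_sub_add_val_sub h
  have := val_add_val_of_le (a := s - b) (b := b - a) (by omega)
  rw [sub_add_sub_cancel] at this
  have := (s - b).val_lt
  omega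

theorem add_natCast_ne_add_natCast {x y : ℕ} (hx : x < (b - a).val) (hy : y < (a - b).val) :
    a + x ≠ b + y := by
  have hab : a ≠ b := by rintro rfl; simp at hx
  intro h
  have hcast : ((x : ℕ) : ZMod n) = (((b - a).val + y : ℕ) : ZMod n) := by
    push_cast; rw [natCast_zmod_val]; linear_combination h
  have hsum := val_sub_add_val_sub hab
  have := natCast_inj_of_lt (by omega) (by omega) hcast
  omega

end ZMod

namespace Multigraph

variable {G : Multigraph}

namespace ClosedWalk

variable {n : ℕ} (w : G.ClosedWalk n)

theorem hvtx_enter (i : ZMod n) : G.hvtx (w.enter i) = w.vtx i := by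
  simpa [enter, vtx] using (w.compat (i - 1)).symm

variable {w}

theorem IsEulerian.injective (hE : w.IsEulerian) : Function.Injective fun i => (w.dart i).1 :=
  fun _ _ hab => (hE _).unique hab rfl

theorem IsEulerian.enter_injective (hE : w.IsEulerian) : Function.Injective w.enter :=
  fun _ _ hab => sub_left_injective (hE.injective (congrArg Prod.fst hab :))

theorem IsEulerian.leave_injective (hE : w.IsEulerian) : Function.Injective w.leave :=
  fun _ _ hab => hE.injective (congrArg Prod.fst hab)

theorem IsEulerian.enter_ne_leave (hE : w.IsEulerian) (a b : ZMod n) : w.enter a ≠ w.leave b := by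
  intro h
  have hab : a - 1 = b := hE.injective (congrArg Prod.fst h :)
  have := congrArg Prod.snd h
  simp [enter, leave, ← hab] at this

/-- Each visit to `u` uses one entering and one leaving half-edge at `u`, all of them distinct. -/
theorem IsEulerian.ncard_vtx_eq_le_two [NeZero n] (hreg : G.FourRegular) (hE : w.IsEulerian)
    (u : G.V) : {i | w.vtx i = u}.ncard ≤ 2 := by
  set P := {i | w.vtx i = u}
  have hsub : w.enter '' P ∪ w.leave '' P ⊆ {h | G.hvtx h = u} := by
    rintro _ (⟨i, hi, rfl⟩ | ⟨i, hi, rfl⟩)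
    · exact (w.hvtx_enter i).trans hi
    · exact hi
  have hfin : {h | G.hvtx h = u}.Finite := Set.finite_of_ncard_ne_zero (by rw [hreg u]; omega)
  have hdisj : Disjoint (w.enter '' P) (w.leave '' P) := by
    rw [Set.disjoint_left]
    rintro _ ⟨a, -, rfl⟩ ⟨b, -, hb⟩
    exact hE.enter_ne_leave a b hb.symm
  have := Set.ncard_le_ncard hsub hfin
  rw [Set.ncard_union_eq hdisj, Set.ncard_image_of_injective _ hE.enter_injective,
    Set.ncard_image_of_injective _ hE.leave_injective, hreg u] at this
  omega

theorem IsEulerian.eq_or_eq_or_eq_of_vtx_eq [NeZero n] (hreg : G.FourRegular)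
    (hE : w.IsEulerian) {a b c : ZMod n} (hab : w.vtx a = w.vtx b) (hac : w.vtx a = w.vtx c) :
    a = b ∨ a = c ∨ b = c := by
  by_contra! h
  have h3 : ({a, b, c} : Set (ZMod n)).ncard = 3 :=
    Set.ncard_eq_three.mpr ⟨a, b, c, h.1, h.2.1, h.2.2, rfl⟩
  have hsub : ({a, b, c} : Set (ZMod n)) ⊆ {i | w.vtx i = w.vtx a} := by
    rintro x (rfl | rfl | rfl)
    exacts [rfl, hab.symm, hac.symm]
  have := (Set.ncard_le_ncard hsub).trans (hE.ncard_vtx_eq_le_two hreg _)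
  omega

/-- Cutting a loop out of a closed walk keeps its half-edges but not its passages: at the cut,
the entering and the leaving half-edge come from different passages. -/
def UsesHalfEdgesOf {m : ℕ} (c : G.ClosedWalk m) (w : G.ClosedWalk n) : Prop :=
  (∀ k, ∃ l, c.enter k = w.enter l) ∧ ∀ k, ∃ l, c.leave k = w.leave l

section UsesHalfEdgesOf

variable {m : ℕ} {c : G.ClosedWalk m} {w : G.ClosedWalk n}

theorem UsesHalfEdgesOf.refl (w : G.ClosedWalk n) : w.UsesHalfEdgesOf w :=
  ⟨fun k => ⟨k, rfl⟩, fun k => ⟨k, rfl⟩⟩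

theorem UsesHalfEdgesOf.trans {l : ℕ} {b : G.ClosedWalk l} (hcb : c.UsesHalfEdgesOf b)
    (hbw : b.UsesHalfEdgesOf w) : c.UsesHalfEdgesOf w := by
  refine ⟨fun k => ?_, fun k => ?_⟩
  · obtain ⟨k', hk'⟩ := hcb.1 k
    obtain ⟨k'', hk''⟩ := hbw.1 k'
    exact ⟨k'', hk'.trans hk''⟩
  · obtain ⟨k', hk'⟩ := hcb.2 k
    obtain ⟨k'', hk''⟩ := hbw.2 k'
    exact ⟨k'', hk'.trans hk''⟩

theorem UsesHalfEdgesOf.edges_subset (h : c.UsesHalfEdgesOf w) : c.edges ⊆ w.edges := by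
  rintro e ⟨k, rfl⟩
  obtain ⟨l, hl⟩ := h.2 k
  exact ⟨l, congrArg Prod.fst hl.symm⟩

theorem UsesHalfEdgesOf.exists_vtx_eq (h : c.UsesHalfEdgesOf w) (k : ZMod m) :
    ∃ l, w.vtx l = c.vtx k := by
  obtain ⟨l, hl⟩ := h.2 k
  exact ⟨l, congrArg G.hvtx hl.symm⟩

theorem UsesHalfEdgesOf.enter_eq_and_leave_eq (h : c.UsesHalfEdgesOf w) {k : ZMod m}
    {l : ZMod n} (hk : c.vtx k = w.vtx l) (hl : ∀ l', w.vtx l' = w.vtx l → l' = l) :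
    c.enter k = w.enter l ∧ c.leave k = w.leave l := by
  obtain ⟨a, ha⟩ := h.1 k
  obtain ⟨b, hb⟩ := h.2 k
  have hva : w.vtx a = w.vtx l := by rw [← hvtx_enter, ← ha, hvtx_enter, hk]
  have hvb : w.vtx b = w.vtx l := (congrArg G.hvtx hb).symm.trans hk
  rw [ha, hb, hl a hva, hl b hvb]
  exact ⟨rfl, rfl⟩

end UsesHalfEdgesOf

section NeZero

variable [NeZero n]

def arc (w : G.ClosedWalk n) (i j : ZMod n) [NeZero (j - i).val] (hv : w.vtx i = w.vtx j) :
    G.ClosedWalk (j - i).val where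
  dart k := w.dart (i + k.val)
  compat k := by
    rcases ZMod.val_add_one_eq_or k with h | ⟨h, hk⟩
    · rw [h, Nat.cast_add_one, ← add_assoc]
      exact w.compat _
    · have hj : i + (k.val : ZMod n) + 1 = j := by
        rw [add_assoc, ← Nat.cast_add_one, hk, ZMod.natCast_zmod_val, add_sub_cancel]
      rw [h, Nat.cast_zero, add_zero, ← w.compat, hj]
      exact hv

section arc

variable (w : G.ClosedWalk n) {i j : ZMod n} [NeZero (j - i).val] (hv : w.vtx i = w.vtx j)

theorem arc_vtx (k : ZMod (j - i).val) : (w.arc i j hv).vtx k = w.vtx (i + k.val) := rfl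

theorem arc_leave (k : ZMod (j - i).val) : (w.arc i j hv).leave k = w.leave (i + k.val) := rfl

theorem arc_enter (k : ZMod (j - i).val) :
    (w.arc i j hv).enter k = w.enter (i + (k - 1).val + 1) := by
  simp [enter, arc]

theorem arc_enter_of_ne_zero {k : ZMod (j - i).val} (hk : k ≠ 0) :
    (w.arc i j hv).enter k = w.enter (i + k.val) := by
  rcases ZMod.val_add_one_eq_or (k - 1) with h | ⟨h, -⟩ <;> rw [sub_add_cancel] at h
  · rw [arc_enter, add_assoc, ← Nat.cast_add_one, ← h]
  · exact absurd ((ZMod.val_eq_zero k).mp h) hk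

theorem arc_enter_zero : (w.arc i j hv).enter 0 = w.enter j := by
  rcases ZMod.val_add_one_eq_or (0 - 1 : ZMod (j - i).val) with h | ⟨-, h⟩
  · rw [sub_add_cancel, ZMod.val_zero] at h
    omega
  · rw [arc_enter, add_assoc, ← Nat.cast_add_one, h, ZMod.natCast_zmod_val, add_sub_cancel]

theorem arc_vtx_zero : (w.arc i j hv).vtx 0 = w.vtx i := by
  simp [arc_vtx]

theorem arc_leave_zero : (w.arc i j hv).leave 0 = w.leave i := by
  simp [arc_leave]

theorem arc_vtx_val_sub {s : ZMod n} (hs : (s - i).val < (j - i).val) :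
    (w.arc i j hv).vtx ((s - i).val) = w.vtx s := by
  rw [arc_vtx, ZMod.val_cast_of_lt hs, ZMod.natCast_zmod_val, add_sub_cancel]

theorem arc_usesHalfEdgesOf : (w.arc i j hv).UsesHalfEdgesOf w :=
  ⟨fun k => ⟨_, arc_enter w hv k⟩, fun k => ⟨_, arc_leave w hv k⟩⟩

end arc

theorem exists_usesHalfEdgesOf_of_not_isSimple {w : G.ClosedWalk n} (hw : ¬ w.IsSimple)
    (s : ZMod n) : ∃ m < n, 0 < m ∧ ∃ c : G.ClosedWalk m, c.UsesHalfEdgesOf w ∧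
      ∃ k, c.vtx k = w.vtx s := by
  obtain ⟨a, b, hv, hab⟩ := Function.not_injective_iff.mp hw
  have := ZMod.neZero_val_sub hab
  have := ZMod.neZero_val_sub hab.symm
  rcases ZMod.val_sub_lt_or hab s with hs | hs
  · exact ⟨_, ZMod.val_lt _, NeZero.pos _, w.arc a b hv, arc_usesHalfEdgesOf w hv, _,
      arc_vtx_val_sub w hv hs⟩
  · exact ⟨_, ZMod.val_lt _, NeZero.pos _, w.arc b a hv.symm, arc_usesHalfEdgesOf w hv.symm, _,
      arc_vtx_val_sub w hv.symm hs⟩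

end NeZero

theorem exists_isSimple_usesHalfEdgesOf [hn : NeZero n] (w : G.ClosedWalk n) (s : ZMod n) :
    ∃ m, 0 < m ∧ ∃ c : G.ClosedWalk m, c.IsSimple ∧ c.UsesHalfEdgesOf w ∧
      ∃ k, c.vtx k = w.vtx s := by
  induction n using Nat.strong_induction_on generalizing hn with
  | _ n ih =>
    by_cases hw : w.IsSimple
    · exact ⟨n, NeZero.pos n, w, hw, .refl w, s, rfl⟩
    obtain ⟨m, hmn, hm, w', hw', k, hk⟩ := exists_usesHalfEdgesOf_of_not_isSimple hw s
    have : NeZero m := NeZero.of_pos hm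
    obtain ⟨l, hl, c, hc, hcw', k', hk'⟩ := ih m hmn w' k
    exact ⟨l, hl, c, hc, hcw'.trans hw', k', hk'.trans hk⟩

section EulerianArcs

variable [NeZero n] {w : G.ClosedWalk n} {i j : ZMod n} [NeZero (j - i).val]
  [NeZero (i - j).val] (hv : w.vtx i = w.vtx j)

theorem edgeDisjoint_arc (hE : w.IsEulerian) :
    EdgeDisjoint (w.arc i j hv) (w.arc j i hv.symm) := by
  rintro e ⟨a, rfl⟩ ⟨b, hb⟩
  exact ZMod.add_natCast_ne_add_natCast a.val_lt b.val_lt (hE.injective hb).symm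

theorem eq_zero_of_arc_vtx_eq (hreg : G.FourRegular) (hE : w.IsEulerian)
    {k : ZMod (j - i).val} (hk : (w.arc i j hv).vtx k = (w.arc i j hv).vtx 0) : k = 0 := by
  rw [arc_vtx, arc_vtx_zero] at hk
  rcases hE.eq_or_eq_or_eq_of_vtx_eq hreg hv hk.symm with h | h | h
  · exact absurd (by rw [h, sub_self, ZMod.val_zero]) (NeZero.ne (j - i).val)
  · have := ZMod.natCast_inj_of_lt (k.val_lt.trans (ZMod.val_lt _)) (NeZero.pos n)
      (by simpa using h.symm)
    exact (ZMod.val_eq_zero k).mp this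
  · exact absurd (by simpa using h.symm)
      (ZMod.add_natCast_ne_add_natCast k.val_lt (NeZero.pos (i - j).val))

theorem exists_isSimple_usesHalfEdgesOf_arc (hreg : G.FourRegular) (hE : w.IsEulerian) :
    ∃ m, 0 < m ∧ ∃ c : G.ClosedWalk m, c.IsSimple ∧ c.UsesHalfEdgesOf (w.arc i j hv) ∧
      ∃ k, c.vtx k = w.vtx i ∧ c.enter k = w.enter j ∧ c.leave k = w.leave i := by
  obtain ⟨m, hm, c, hc, hcw, k, hk⟩ := (w.arc i j hv).exists_isSimple_usesHalfEdgesOf 0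
  obtain ⟨he, hl⟩ := hcw.enter_eq_and_leave_eq hk fun _ => eq_zero_of_arc_vtx_eq hv hreg hE
  rw [arc_vtx_zero] at hk
  rw [arc_enter_zero] at he
  rw [arc_leave_zero] at hl
  exact ⟨m, hm, c, hc, hcw, k, hk, he, hl⟩

theorem eq_of_arc_vtx_eq_arc_vtx (hreg : G.FourRegular) (hE : w.IsEulerian) {a a' b}
    (ha : (w.arc i j hv).vtx a = (w.arc j i hv.symm).vtx b)
    (ha' : (w.arc i j hv).vtx a' = (w.arc j i hv.symm).vtx b) : a = a' := by
  rw [arc_vtx, arc_vtx] at ha ha'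
  rcases hE.eq_or_eq_or_eq_of_vtx_eq hreg (ha.trans ha'.symm) ha with h | h | h
  · exact ZMod.val_injective _ <| ZMod.natCast_inj_of_lt (a.val_lt.trans (ZMod.val_lt _))
      (a'.val_lt.trans (ZMod.val_lt _)) (add_left_cancel h)
  · exact absurd h (ZMod.add_natCast_ne_add_natCast a.val_lt b.val_lt)
  · exact absurd h (ZMod.add_natCast_ne_add_natCast a'.val_lt b.val_lt)

end EulerianArcs

end ClosedWalk

theorem Turning.arc_of_ne_zero {n : ℕ} [NeZero n] {X : G.XStructure} {w : G.ClosedWalk n}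
    (ht : Turning X w) {i j : ZMod n} [NeZero (j - i).val] (hv : w.vtx i = w.vtx j)
    {k : ZMod (j - i).val} (hk : k ≠ 0) :
    X.p ((w.arc i j hv).enter k) ≠ X.p ((w.arc i j hv).leave k) := by
  rw [ClosedWalk.arc_enter_of_ne_zero w hv hk, ClosedWalk.arc_leave]
  exact ht _

theorem CrossingVertex.eq_vtx_zero {X : G.XStructure} {d e m₁ m₂ : ℕ} {w₁ : G.ClosedWalk d}
    {w₂ : G.ClosedWalk e} {c₁ : G.ClosedWalk m₁} {c₂ : G.ClosedWalk m₂}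
    (h₁ : c₁.UsesHalfEdgesOf w₁) (h₂ : c₂.UsesHalfEdgesOf w₂)
    (hturn : ∀ k ≠ 0, X.p (w₁.enter k) ≠ X.p (w₁.leave k))
    (honce : ∀ a a' b, w₁.vtx a = w₂.vtx b → w₁.vtx a' = w₂.vtx b → a = a')
    {u : G.V} (hu : CrossingVertex X c₁ c₂ u) : u = w₁.vtx 0 := by
  obtain ⟨k, l, rfl, hl, hkp, -⟩ := hu
  obtain ⟨b, hb⟩ := h₂.exists_vtx_eq l
  obtain ⟨a, ha⟩ := h₁.exists_vtx_eq k
  have hb : w₂.vtx b = w₁.vtx a := hb.trans (hl.trans ha.symm)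
  obtain ⟨he, hle⟩ := h₁.enter_eq_and_leave_eq ha.symm
    fun a' ha' => honce a' a b (ha'.trans hb.symm) hb.symm
  by_cases ha0 : a = 0
  · rw [← ha, ha0]
  · exact absurd (he ▸ hle ▸ hkp) (hturn a ha0)

end Multigraph

open Multigraph in
/-- If an X-graph has no two edge-disjoint simple cycles with
exactly one crossing vertex, then every turning Eulerian circuit is strongly
turning. -/
theorem statement4 (G : Multigraph) (X : G.XStructure) (hreg : G.FourRegular)
    (hno : ¬ ∃ (n m : ℕ), 0 < n ∧ 0 < m ∧
      ∃ (c₁ : G.ClosedWalk n) (c₂ : G.ClosedWalk m),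
        c₁.IsSimple ∧ c₂.IsSimple ∧ EdgeDisjoint c₁ c₂ ∧
        ∃! v, CrossingVertex X c₁ c₂ v)
    {N : ℕ} (hN : 0 < N) (T : G.ClosedWalk N)
    (hE : T.IsEulerian) (ht : Turning X T) :
    StronglyTurning X T := by
  have : NeZero N := NeZero.of_pos hN
  refine ⟨ht, fun i j hv => ?_⟩
  by_contra hp
  have hij : i ≠ j := by rintro rfl; exact hp rfl
  have := ZMod.neZero_val_sub hij
  have := ZMod.neZero_val_sub hij.symm
  obtain ⟨m₁, hm₁, c₁, hc₁, hcw₁, k₁, hk₁, he₁, hl₁⟩ :=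
    ClosedWalk.exists_isSimple_usesHalfEdgesOf_arc hv hreg hE
  obtain ⟨m₂, hm₂, c₂, hc₂, hcw₂, k₂, hk₂, he₂, hl₂⟩ :=
    ClosedWalk.exists_isSimple_usesHalfEdgesOf_arc hv.symm hreg hE
  have hdisj : EdgeDisjoint c₁ c₂ := fun e h₁ h₂ =>
    ClosedWalk.edgeDisjoint_arc hv hE e (hcw₁.edges_subset h₁) (hcw₂.edges_subset h₂)
  refine hno ⟨m₁, m₂, hm₁, hm₂, c₁, c₂, hc₁, hc₂, hdisj, T.vtx i,
    ⟨k₁, k₂, hk₁, hk₂.trans hv.symm, ?_⟩, fun u hu => ?_⟩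
  · rw [he₁, hl₁, he₂, hl₂]
    have hi := ht i
    have hj := ht j
    generalize X.p (T.enter i) = a, X.p (T.leave i) = b, X.p (T.enter j) = c,
      X.p (T.leave j) = d at hi hj hp ⊢
    revert a b c d
    decide
  · rw [hu.eq_vtx_zero hcw₁ hcw₂ (fun _ => ht.arc_of_ne_zero hv)
      (fun a a' b => ClosedWalk.eq_of_arc_vtx_eq_arc_vtx hv hreg hE), ClosedWalk.arc_vtx_zero]
end

section
/- Let T be a turning Eulerian circuit of an X-graph G, and suppose there is a vertex A such that T enters A once along a half-edge of one pair and once along a half-edge of the other pair (i.e., T is not strongly turning at A). Then the two closed walks obtained by splitting T at the two visits of A are edge-disjoint closed walks whose unique crossing vertex is A. -/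
/-!
Cutting the Eulerian circuit `T` at its two visits `i` and `i + n` of `A` gives the closed walks
formed by its steps in `[i, i + n)` and in `[i + n, i + N)`; they partition the edges because `T`
uses each edge once. At every vertex other than `A` each passage of either walk is a passage of
`T`, hence turning, so no other vertex is a crossing vertex. At `A` the first walk enters along the
half-edge by which `T` enters at its second visit and leaves as `T` leaves at its first, and
symmetrically for the second walk. Since `T` is turning and its two entries into `A` lie in
different pairs, both walks go straight through `A`, along different pairs.
-/

lemma Bool.eq_of_ne_of_ne {a b c : Bool} (ha : a ≠ c) (hb : b ≠ c) : a = b := by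
  decide +revert

lemma ZMod.exists_lt_eq_add_natCast {N : ℕ} [NeZero N] (i j : ZMod N) :
    ∃ n < N, j = i + n :=
  ⟨(j - i).val, ZMod.val_lt _, by rw [ZMod.natCast_zmod_val]; ring⟩

lemma ZMod.add_natCast_add_natCast_of_add_eq {N n m : ℕ} (i : ZMod N) (h : n + m = N) :
    i + n + m = i := by
  rw [add_assoc, ← Nat.cast_add, h, ZMod.natCast_self, add_zero]

namespace Multigraph

namespace ClosedWalk

variable {G : Multigraph} {N : ℕ} (T : G.ClosedWalk N) (i : ZMod N) {n : ℕ}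

lemma vtx_add_natCast_mod (hclose : T.vtx (i + n) = T.vtx i) {a : ℕ} (ha : a ≤ n) :
    T.vtx (i + (a % n : ℕ)) = T.vtx (i + a) := by
  rcases ha.lt_or_eq with ha | rfl
  · rw [Nat.mod_eq_of_lt ha]
  · rw [Nat.mod_self, Nat.cast_zero, add_zero, hclose]

def subwalk [NeZero n] (hclose : T.vtx (i + n) = T.vtx i) : G.ClosedWalk n where
  dart k := T.dart (i + k.val)
  compat k := by
    have hk : k + 1 = ((k.val + 1 : ℕ) : ZMod n) := by push_cast [ZMod.natCast_zmod_val]; rfl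
    have hnext := T.vtx_add_natCast_mod i hclose (Nat.succ_le_of_lt k.val_lt)
    rw [hk, ZMod.val_natCast]
    rw [Nat.cast_succ, ← add_assoc] at hnext
    exact hnext.trans (T.compat _)

variable [NeZero n] (hclose : T.vtx (i + n) = T.vtx i)

lemma subwalk_vtx (k : ZMod n) : (T.subwalk i hclose).vtx k = T.vtx (i + k.val) := rfl

lemma subwalk_leave (k : ZMod n) : (T.subwalk i hclose).leave k = T.leave (i + k.val) := rfl

lemma subwalk_vtx_zero : (T.subwalk i hclose).vtx 0 = T.vtx i := by
  simp [subwalk_vtx]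

lemma subwalk_leave_zero : (T.subwalk i hclose).leave 0 = T.leave i := by
  simp [subwalk_leave]

lemma subwalk_enter_zero : (T.subwalk i hclose).enter 0 = T.enter (i + n) := by
  have hlast : (0 - 1 : ZMod n) = ((n - 1 : ℕ) : ZMod n) := by
    rw [Nat.cast_pred (NeZero.pos n), ZMod.natCast_self]
  have hcast : ((n - 1 : ℕ) : ZMod N) = n - 1 := Nat.cast_pred (NeZero.pos n)
  simp only [enter, subwalk]
  rw [hlast, ZMod.val_cast_of_lt (Nat.sub_lt (NeZero.pos n) one_pos), hcast, add_sub_assoc]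

lemma subwalk_enter_of_ne_zero {k : ZMod n} (hk : k ≠ 0) :
    (T.subwalk i hclose).enter k = T.enter (i + k.val) := by
  have hk' : k = (((k - 1).val + 1 : ℕ) : ZMod n) := by push_cast [ZMod.natCast_zmod_val]; ring
  have hlt : (k - 1).val + 1 < n := by
    refine lt_of_le_of_ne (k - 1).val_lt fun h => hk ?_
    rw [hk', h, ZMod.natCast_self]
  have hval : k.val = (k - 1).val + 1 := by rw [← ZMod.val_cast_of_lt hlt, ← hk']
  simp only [enter, subwalk, hval, Nat.cast_succ, add_sub_cancel_right, ← add_assoc]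

lemma subwalk_edges :
    (T.subwalk i hclose).edges = {e | ∃ a < n, (T.dart (i + a)).1 = e} := by
  ext e
  constructor
  · rintro ⟨k, rfl⟩
    exact ⟨k.val, k.val_lt, rfl⟩
  · rintro ⟨a, ha, rfl⟩
    exact ⟨a, by simp only [subwalk, ZMod.val_cast_of_lt ha]⟩

lemma eq_zero_of_subwalk_straight {X : G.XStructure} (ht : Turning X T) {k : ZMod n}
    (hk : X.p ((T.subwalk i hclose).enter k) = X.p ((T.subwalk i hclose).leave k)) : k = 0 := by
  by_contra hk0
  rw [subwalk_enter_of_ne_zero _ _ _ hk0, subwalk_leave] at hk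
  exact ht _ hk

lemma IsEulerian.isTrail {T : G.ClosedWalk N} (hT : T.IsEulerian) : T.IsTrail :=
  fun _ _ h => (hT _).unique rfl h.symm

variable {m : ℕ} [NeZero m] (hclose' : T.vtx (i + n + m) = T.vtx (i + n))

lemma edgeDisjoint_subwalk_subwalk (hT : T.IsTrail) (hnm : n + m = N) :
    EdgeDisjoint (T.subwalk i hclose) (T.subwalk (i + n) hclose') := by
  intro e he he'
  rw [subwalk_edges] at he he'
  obtain ⟨a, ha, rfl⟩ := he
  obtain ⟨b, hb, hab⟩ := he'
  have hcast : ((n + b : ℕ) : ZMod N) = a := by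
    push_cast
    exact add_left_cancel ((add_assoc _ _ _).symm.trans (hT hab))
  rw [ZMod.natCast_eq_natCast_iff', Nat.mod_eq_of_lt (by omega), Nat.mod_eq_of_lt (by omega)]
    at hcast
  omega

lemma edges_subwalk_union_subwalk (hnm : n + m = N) :
    (T.subwalk i hclose).edges ∪ (T.subwalk (i + n) hclose').edges = T.edges := by
  have : NeZero N := ⟨by have := NeZero.ne n; omega⟩
  rw [subwalk_edges, subwalk_edges]
  ext e
  constructor
  · rintro (⟨a, -, rfl⟩ | ⟨b, -, rfl⟩) <;> exact ⟨_, rfl⟩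
  · rintro ⟨t, rfl⟩
    obtain ⟨s, hs, rfl⟩ := ZMod.exists_lt_eq_add_natCast i t
    rcases lt_or_ge s n with hsn | hsn
    · exact Or.inl ⟨s, hsn, rfl⟩
    · refine Or.inr ⟨s - n, by omega, ?_⟩
      rw [add_assoc, ← Nat.cast_add, Nat.add_sub_cancel' hsn]

lemma crossingVertex_subwalk_subwalk_iff {X : G.XStructure} (ht : Turning X T) (hnm : n + m = N)
    (hns : X.p (T.enter i) ≠ X.p (T.enter (i + n))) (v : G.V) :
    CrossingVertex X (T.subwalk i hclose) (T.subwalk (i + n) hclose') v ↔ v = T.vtx i := by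
  constructor
  · rintro ⟨k, -, rfl, -, hk, -⟩
    rw [T.eq_zero_of_subwalk_straight i hclose ht hk, subwalk_vtx_zero]
  · rintro rfl
    have hstraight₁ : X.p (T.enter (i + n)) = X.p (T.leave i) :=
      Bool.eq_of_ne_of_ne hns.symm (ht i).symm
    have hstraight₂ : X.p (T.enter i) = X.p (T.leave (i + n)) :=
      Bool.eq_of_ne_of_ne hns (ht (i + n)).symm
    refine ⟨0, 0, subwalk_vtx_zero .., (subwalk_vtx_zero ..).trans hclose, ?_, ?_, ?_⟩
    · rwa [subwalk_enter_zero, subwalk_leave_zero]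
    · rwa [subwalk_enter_zero, subwalk_leave_zero, ZMod.add_natCast_add_natCast_of_add_eq i hnm]
    · rw [subwalk_leave_zero, subwalk_leave_zero, ← hstraight₁, ← hstraight₂]
      exact hns.symm

end ClosedWalk

end Multigraph

open Multigraph in
theorem statement10_general (G : Multigraph) (X : G.XStructure)
    {N : ℕ} (hN : 0 < N) (T : G.ClosedWalk N)
    (hE : T.IsEulerian) (ht : Turning X T)
    (A : G.V) (i j : ZMod N) (hij : i ≠ j)
    (hiA : T.vtx i = A) (hjA : T.vtx j = A)
    (hns : X.p (T.enter i) ≠ X.p (T.enter j)) :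
    ∃ (n m : ℕ), 0 < n ∧ 0 < m ∧
      ∃ (w₁ : G.ClosedWalk n) (w₂ : G.ClosedWalk m),
        EdgeDisjoint w₁ w₂ ∧ w₁.edges ∪ w₂.edges = T.edges ∧
        (∀ v, CrossingVertex X w₁ w₂ v ↔ v = A) := by
  have : NeZero N := ⟨hN.ne'⟩
  obtain ⟨n, hnN, rfl⟩ := ZMod.exists_lt_eq_add_natCast i j
  have : NeZero n := ⟨by rintro rfl; simp at hij⟩
  have : NeZero (N - n) := ⟨by omega⟩
  have hnm : n + (N - n) = N := by omega
  have hclose : T.vtx (i + n) = T.vtx i := hjA.trans hiA.symm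
  have hclose' : T.vtx (i + n + (N - n : ℕ)) = T.vtx (i + n) := by
    rw [ZMod.add_natCast_add_natCast_of_add_eq i hnm, hclose]
  refine ⟨n, N - n, NeZero.pos n, NeZero.pos _, T.subwalk i hclose, T.subwalk (i + n) hclose',
    T.edgeDisjoint_subwalk_subwalk i hclose hclose' hE.isTrail hnm,
    T.edges_subwalk_union_subwalk i hclose hclose' hnm, fun v => ?_⟩
  rw [T.crossingVertex_subwalk_subwalk_iff i hclose hclose' ht hnm hns, hiA]

open Multigraph in
/-- If a turning Eulerian circuit `T` fails to be strongly turning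
at a vertex `A` (its two entries into `A` use half-edges of different pairs),
then splitting `T` at the two visits of `A` yields two edge-disjoint closed
walks, whose edges together are all the edges of `T`, with unique crossing
vertex `A`. -/
theorem statement10 (G : Multigraph) (X : G.XStructure) (hreg : G.FourRegular)
    {N : ℕ} (hN : 0 < N) (T : G.ClosedWalk N)
    (hE : T.IsEulerian) (ht : Turning X T)
    (A : G.V) (i j : ZMod N) (hij : i ≠ j)
    (hiA : T.vtx i = A) (hjA : T.vtx j = A)
    (hns : X.p (T.enter i) ≠ X.p (T.enter j)) :
    ∃ (n m : ℕ), 0 < n ∧ 0 < m ∧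
      ∃ (w₁ : G.ClosedWalk n) (w₂ : G.ClosedWalk m),
        EdgeDisjoint w₁ w₂ ∧ w₁.edges ∪ w₂.edges = T.edges ∧
        (∀ v, CrossingVertex X w₁ w₂ v ↔ v = A) :=
  statement10_general G X hN T hE ht A i j hij hiA hjA hns
end
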